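/- arXiv:2212.03636 — 4 statements merged into one kernel-verified Lean document; each statement's English description precedes it below -/
import Mathlib

section
/- Suppose (V, I, P) is a Distflow solution on a line network with N nodes, resistance r > 0, and consumptions p_1, …, p_N ≥ 0. Then the voltages satisfy the backward recursion V_{N−1} = 1 + r·p_N, and V_{j−1} = 2·V_j − V_{j+1} + r·p_j / V_j for every j = 1, …, N−1. -/
/-- For a Distflow solution `(V, I, P)` on a line network with `N` nodes,
resistance `r > 0` and nonnegative consumptions `p 1, …, p N`, the voltages satisfy the
backward recursion `V (N-1) = 1 + r * p N` and
`V (j-1) = 2 * V j - V (j+1) + r * p j / V j` for every `j = 1, …, N-1`. -/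
theorem distflow_voltage_recursion
    (N : ℕ) (hN : 1 ≤ N) (r : ℝ) (hr : 0 < r)
    (p V I P : ℕ → ℝ)
    (hp : ∀ j, 1 ≤ j → j ≤ N → 0 ≤ p j)
    (hV : ∀ j, j ≤ N → 0 < V j)
    (hVN : V N = 1)
    (hPend : P (N + 1) = 0)
    (hbal : ∀ j, 1 ≤ j → j ≤ N → P j - r * (I j) ^ 2 = p j + P (j + 1))
    (hohm : ∀ j, 1 ≤ j → j ≤ N → V (j - 1) - V j = r * I j)
    (hpow : ∀ j, 1 ≤ j → j ≤ N → P j = V (j - 1) * I j) :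
    V (N - 1) = 1 + r * p N ∧
      ∀ j, 1 ≤ j → j ≤ N - 1 →
        V (j - 1) = 2 * V j - V (j + 1) + r * p j / V j := by
  -- Key identity: V j * I j = p j + P (j+1) for 1 ≤ j ≤ N
  have key : ∀ j, 1 ≤ j → j ≤ N → V j * I j = p j + P (j + 1) := by
    intro j h1 h2
    have hb := hbal j h1 h2
    have ho := hohm j h1 h2
    have hpw := hpow j h1 h2
    have hm : (V (j - 1) - V j) * I j = (r * I j) * I j := by rw [ho]
    have : V j * I j = P j - r * (I j) ^ 2 := by
      rw [hpw]; linear_combination -hm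
    rw [this, hb]
  constructor
  · have hk := key N hN le_rfl
    rw [hVN, hPend] at hk
    have hIN : I N = p N := by linarith
    have ho := hohm N hN le_rfl
    rw [hVN, hIN] at ho
    linarith
  · intro j h1 h2
    have hjN : j ≤ N := by omega
    have hj1N : j + 1 ≤ N := by omega
    have hVj : 0 < V j := hV j hjN
    have hk := key j h1 hjN
    have hpw2 := hpow (j + 1) (by omega) hj1N
    simp only [Nat.add_sub_cancel] at hpw2
    rw [hpw2] at hk
    -- I j = I (j+1) + p j / V j
    have hIj : I j = I (j + 1) + p j / V j := by
      field_simp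
      nlinarith
    have ho := hohm j h1 hjN
    have ho2 := hohm (j + 1) (by omega) hj1N
    simp only [Nat.add_sub_cancel] at ho2
    rw [hIj] at ho
    have : r * (p j / V j) = r * p j / V j := by ring
    nlinarith [ho, ho2]
end

section
/- Suppose (V, I, P) is a Distflow solution on a line network with N nodes, resistance r > 0, and consumptions p_1, …, p_N ≥ 0. Then every current is nonnegative, I_j ≥ 0, and the active power flow on each edge dominates the total downstream consumption: P_j ≥ Σ_{k=j}^{N} p_k for every j = 1, …, N. -/
/-- For a Distflow solution `(V, I, P)` on a line network with `N` nodes,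
resistance `r > 0` and nonnegative consumptions, every current is nonnegative, `I j ≥ 0`,
and the active power flow on each edge dominates the total downstream consumption:
`P j ≥ ∑_{k=j}^N p k` for every `j = 1, …, N`. -/
theorem distflow_current_nonneg_power_dominates
    (N : ℕ) (hN : 1 ≤ N) (r : ℝ) (hr : 0 < r)
    (p V I P : ℕ → ℝ)
    (hp : ∀ j, 1 ≤ j → j ≤ N → 0 ≤ p j)
    (hV : ∀ j, j ≤ N → 0 < V j)
    (hVN : V N = 1)
    (hPend : P (N + 1) = 0)
    (hbal : ∀ j, 1 ≤ j → j ≤ N → P j - r * (I j) ^ 2 = p j + P (j + 1))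
    (hohm : ∀ j, 1 ≤ j → j ≤ N → V (j - 1) - V j = r * I j)
    (hpow : ∀ j, 1 ≤ j → j ≤ N → P j = V (j - 1) * I j) :
    ∀ j, 1 ≤ j → j ≤ N →
      0 ≤ I j ∧ P j ≥ ∑ k ∈ Finset.Icc j N, p k := by
  have key : ∀ d j, 1 ≤ j → j ≤ N → N - j ≤ d → P j ≥ ∑ k ∈ Finset.Icc j N, p k := by
    intro d
    induction d with
    | zero =>
      intro j h1 h2 h3
      have hj : j = N := le_antisymm h2 (by omega)
      subst hj
      rw [Finset.Icc_self, Finset.sum_singleton]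
      have hb := hbal j h1 le_rfl
      nlinarith [sq_nonneg (I j)]
    | succ d ih =>
      intro j h1 h2 h3
      rcases eq_or_lt_of_le h2 with hj | hj
      · subst hj
        rw [Finset.Icc_self, Finset.sum_singleton]
        have hb := hbal j h1 le_rfl
        nlinarith [sq_nonneg (I j)]
      · have hnext := ih (j + 1) (by omega) (by omega) (by omega)
        have hb := hbal j h1 h2
        have hins : Finset.Icc j N = insert j (Finset.Icc (j + 1) N) := by
          ext x; simp; omega
        rw [hins, Finset.sum_insert (by simp)]
        have hpj := hp j h1 h2
        nlinarith [sq_nonneg (I j)]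
  intro j h1 h2
  have hP := key (N - j) j h1 h2 le_rfl
  have hsum : (0:ℝ) ≤ ∑ k ∈ Finset.Icc j N, p k :=
    Finset.sum_nonneg fun k hk => by
      simp only [Finset.mem_Icc] at hk; exact hp k (by omega) hk.2
  have hP0 : 0 ≤ P j := le_trans hsum hP
  have hVpos : 0 < V (j - 1) := hV (j - 1) (by omega)
  have hpw := hpow j h1 h2
  refine ⟨?_, hP⟩
  by_contra h
  push_neg at h
  nlinarith [mul_pos hVpos (neg_pos.mpr h)]
end

section
/- Fix an integer N ≥ 1, a resistance r > 0, and consumptions p_1, …, p_N ≥ 0. The Distflow root voltage dominates the Linearized Distflow root voltage: V_0^D ≥ sqrt( 1 + 2r · Σ_{j=1}^{N} Σ_{k=j}^{N} p_k ) = V_0^{LD}. Equivalently, for a given profile of power consumptions, the Linearized Distflow model underestimates the voltage rise to the root node compared to the Distflow model. -/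
/-- Auxiliary backward recursion for the Distflow voltages on a line network:
`distflowW N r p k` is the Distflow voltage at node `N - k`. -/
noncomputable def distflowW (N : ℕ) (r : ℝ) (p : ℕ → ℝ) : ℕ → ℝ
  | 0 => 1
  | 1 => 1 + r * p N
  | k + 2 =>
      2 * distflowW N r p (k + 1) - distflowW N r p k
        + r * p (N - (k + 1)) / distflowW N r p (k + 1)

/-- The Distflow voltage `V_j^D` at node `j` of the line network with `N` nodes,
resistance `r` and consumptions `p`. -/
noncomputable def distflowV (N : ℕ) (r : ℝ) (p : ℕ → ℝ) (j : ℕ) : ℝ :=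
  distflowW N r p (N - j)

section Aux

variable (N : ℕ) (r : ℝ) (p : ℕ → ℝ)

lemma distflowW_step (hN : 1 ≤ N) (hr : 0 < r)
    (hp : ∀ j, 1 ≤ j → j ≤ N → 0 ≤ p j) :
    ∀ k, k + 1 ≤ N →
      1 ≤ distflowW N r p k ∧ distflowW N r p k ≤ distflowW N r p (k + 1) := by
  intro k
  induction k with
  | zero =>
    intro _
    have hpN : 0 ≤ p N := hp N hN le_rfl
    constructor
    · simp [distflowW]
    · show (distflowW N r p 0) ≤ distflowW N r p 1
      have h0 : distflowW N r p 0 = 1 := rfl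
      have h1 : distflowW N r p 1 = 1 + r * p N := rfl
      rw [h0, h1]
      nlinarith
  | succ k ih =>
    intro hk
    obtain ⟨h1, h2⟩ := ih (by omega)
    have hW1 : (1 : ℝ) ≤ distflowW N r p (k + 1) := le_trans h1 h2
    have hp' : 0 ≤ p (N - (k + 1)) := hp _ (by omega) (by omega)
    refine ⟨hW1, ?_⟩
    have hdef : distflowW N r p (k + 2) = 2 * distflowW N r p (k + 1) - distflowW N r p k
        + r * p (N - (k + 1)) / distflowW N r p (k + 1) := rfl
    have hpos : (0 : ℝ) < distflowW N r p (k + 1) := by linarith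
    have hnn : 0 ≤ r * p (N - (k + 1)) / distflowW N r p (k + 1) :=
      div_nonneg (mul_nonneg hr.le hp') hpos.le
    rw [hdef]; linarith

lemma distflowW_one_le (hN : 1 ≤ N) (hr : 0 < r)
    (hp : ∀ j, 1 ≤ j → j ≤ N → 0 ≤ p j) :
    ∀ k, k ≤ N → 1 ≤ distflowW N r p k := by
  intro k hk
  cases k with
  | zero => simp [distflowW]
  | succ k =>
    obtain ⟨h1, h2⟩ := distflowW_step N r p hN hr hp k (by omega)
    linarith

lemma distflowW_mono (hN : 1 ≤ N) (hr : 0 < r)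
    (hp : ∀ j, 1 ≤ j → j ≤ N → 0 ≤ p j) :
    ∀ i k, i ≤ k → k ≤ N → distflowW N r p i ≤ distflowW N r p k := by
  intro i k hik
  induction k with
  | zero =>
    intro _
    obtain rfl : i = 0 := by omega
    exact le_refl _
  | succ k ihk =>
    intro hkN
    rcases Nat.eq_or_lt_of_le hik with h | h
    · rw [h]
    · have hik' : i ≤ k := by omega
      have := ihk hik' (by omega)
      have h2 := (distflowW_step N r p hN hr hp k (by omega)).2
      linarith

lemma distflowW_diff (hN : 1 ≤ N) :
    ∀ k, k + 1 ≤ N →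
      distflowW N r p (k + 1) - distflowW N r p k
        = ∑ l ∈ Finset.range (k + 1), r * p (N - l) / distflowW N r p l := by
  intro k
  induction k with
  | zero =>
    intro _
    have h0 : distflowW N r p 0 = 1 := rfl
    have h1 : distflowW N r p 1 = 1 + r * p N := rfl
    simp [h0, h1]
  | succ k ih =>
    intro hk
    have hdef : distflowW N r p (k + 2) = 2 * distflowW N r p (k + 1) - distflowW N r p k
        + r * p (N - (k + 1)) / distflowW N r p (k + 1) := rfl
    rw [Finset.sum_range_succ, ← ih (by omega), hdef]
    ring

lemma distflowW_sq_ge (hN : 1 ≤ N) (hr : 0 < r)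
    (hp : ∀ j, 1 ≤ j → j ≤ N → 0 ≤ p j) :
    ∀ k, k ≤ N →
      1 + 2 * r * ∑ m ∈ Finset.range k, ∑ l ∈ Finset.range (m + 1), p (N - l)
        ≤ (distflowW N r p k) ^ 2 := by
  intro k
  induction k with
  | zero => intro _; simp [distflowW]
  | succ k ih =>
    intro hk
    have ihk := ih (by omega)
    have hdiff := distflowW_diff N r p hN k hk
    have hWk : (1 : ℝ) ≤ distflowW N r p k := distflowW_one_le N r p hN hr hp k (by omega)
    have hWk1 : distflowW N r p k ≤ distflowW N r p (k + 1) :=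
      (distflowW_step N r p hN hr hp k hk).2
    -- termwise bound
    have hterm : ∀ l ∈ Finset.range (k + 1),
        2 * r * p (N - l)
          ≤ (distflowW N r p (k + 1) + distflowW N r p k)
              * (r * p (N - l) / distflowW N r p l) := by
      intro l hl
      have hlk : l ≤ k := by simpa [Nat.lt_succ_iff] using hl
      have hWl : (1 : ℝ) ≤ distflowW N r p l := distflowW_one_le N r p hN hr hp l (by omega)
      have hWlk : distflowW N r p l ≤ distflowW N r p k :=
        distflowW_mono N r p hN hr hp l k hlk (by omega)
      have hpl : 0 ≤ p (N - l) := hp _ (by omega) (by omega)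
      have hlpos : (0 : ℝ) < distflowW N r p l := by linarith
      have hcancel : distflowW N r p l * (r * p (N - l) / distflowW N r p l)
          = r * p (N - l) := by
        field_simp
      have htnn : 0 ≤ r * p (N - l) / distflowW N r p l :=
        div_nonneg (mul_nonneg hr.le hpl) hlpos.le
      have h2l : 2 * distflowW N r p l ≤ distflowW N r p (k + 1) + distflowW N r p k := by
        linarith
      calc 2 * r * p (N - l)
          = 2 * distflowW N r p l * (r * p (N - l) / distflowW N r p l) := by
            rw [mul_assoc (2:ℝ) (distflowW N r p l), hcancel]; ring
        _ ≤ (distflowW N r p (k + 1) + distflowW N r p k)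
              * (r * p (N - l) / distflowW N r p l) :=
            mul_le_mul_of_nonneg_right h2l htnn
    have hsum : ∑ l ∈ Finset.range (k + 1), 2 * r * p (N - l)
        ≤ (distflowW N r p (k + 1) + distflowW N r p k)
            * ∑ l ∈ Finset.range (k + 1), r * p (N - l) / distflowW N r p l := by
      rw [Finset.mul_sum]
      exact Finset.sum_le_sum hterm
    have hsq : (distflowW N r p (k + 1)) ^ 2
        = (distflowW N r p k) ^ 2
          + (distflowW N r p (k + 1) + distflowW N r p k)
              * (distflowW N r p (k + 1) - distflowW N r p k) := by ring
    rw [Finset.sum_range_succ]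
    have h1 : ∑ l ∈ Finset.range (k + 1), 2 * r * p (N - l)
        = 2 * r * ∑ l ∈ Finset.range (k + 1), p (N - l) := by
      rw [Finset.mul_sum]
    rw [hsq, ← hdiff] at *
    nlinarith [hsum, ihk]

lemma inner_sum_eq (m : ℕ) (hm : m < N) :
    ∑ l ∈ Finset.range (m + 1), p (N - l) = ∑ k ∈ Finset.Icc (N - m) N, p k := by
  refine Finset.sum_nbij' (fun l => N - l) (fun k => N - k) ?_ ?_ ?_ ?_ ?_
  · intro l hl
    simp only [Finset.mem_range, Nat.lt_succ_iff] at hl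
    simp only [Finset.mem_Icc]
    omega
  · intro k hk
    simp only [Finset.mem_Icc] at hk
    simp only [Finset.mem_range]
    omega
  · intro l hl
    simp only [Finset.mem_range, Nat.lt_succ_iff] at hl
    show N - (N - l) = l
    omega
  · intro k hk
    simp only [Finset.mem_Icc] at hk
    show N - (N - k) = k
    omega
  · intro l hl
    rfl

lemma double_sum_eq (hN : 1 ≤ N) :
    ∑ m ∈ Finset.range N, ∑ l ∈ Finset.range (m + 1), p (N - l)
      = ∑ j ∈ Finset.Icc 1 N, ∑ k ∈ Finset.Icc j N, p k := by
  have h1 : ∑ m ∈ Finset.range N, ∑ l ∈ Finset.range (m + 1), p (N - l)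
      = ∑ m ∈ Finset.range N, ∑ k ∈ Finset.Icc (N - m) N, p k := by
    refine Finset.sum_congr rfl ?_
    intro m hm
    exact inner_sum_eq N p m (Finset.mem_range.mp hm)
  rw [h1]
  refine Finset.sum_nbij' (fun m => N - m) (fun j => N - j) ?_ ?_ ?_ ?_ ?_
  · intro m hm
    simp only [Finset.mem_range] at hm
    simp only [Finset.mem_Icc]
    omega
  · intro j hj
    simp only [Finset.mem_Icc] at hj
    simp only [Finset.mem_range]
    omega
  · intro m hm
    simp only [Finset.mem_range] at hm
    show N - (N - m) = m
    omega
  · intro j hj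
    simp only [Finset.mem_Icc] at hj
    show N - (N - j) = j
    omega
  · intro m hm
    rfl

end Aux

/-- The Distflow root voltage dominates the Linearized Distflow root voltage:
`V_0^D ≥ sqrt (1 + 2 r ∑_{j=1}^N ∑_{k=j}^N p k) = V_0^{LD}`, i.e. the Linearized Distflow
model underestimates the voltage rise to the root node compared to the Distflow model. -/
theorem distflow_root_voltage_ge_linDistflow
    (N : ℕ) (hN : 1 ≤ N) (r : ℝ) (hr : 0 < r)
    (p : ℕ → ℝ) (hp : ∀ j, 1 ≤ j → j ≤ N → 0 ≤ p j) :
    distflowV N r p 0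
      ≥ Real.sqrt (1 + 2 * r * ∑ j ∈ Finset.Icc 1 N, ∑ k ∈ Finset.Icc j N, p k) := by
  have hV : distflowV N r p 0 = distflowW N r p N := by simp [distflowV]
  have hsq := distflowW_sq_ge N r p hN hr hp N le_rfl
  rw [double_sum_eq N p hN] at hsq
  have hWN : (1 : ℝ) ≤ distflowW N r p N := distflowW_one_le N r p hN hr hp N le_rfl
  rw [ge_iff_le, hV]
  have h := Real.sqrt_le_sqrt hsq
  rwa [Real.sqrt_sq (by linarith)] at h
end

section
/- Fix an integer N ≥ 1, a resistance r > 0, and a voltage-drop tolerance Δ with 0 < Δ ≤ 1/2. Define the Distflow feasible set C^D = { p ∈ [0, ∞)^N : V_0^D(p) ≤ 1/(1 − Δ) } and the Linearized Distflow feasible set C^{LD} = { p ∈ [0, ∞)^N : 2r · Σ_{j=1}^{N} Σ_{k=j}^{N} p_k ≤ Δ(2 − Δ)/(1 − Δ)² }. Then C^D ⊆ C^{LD}; that is, every power allocation feasible under the Distflow voltage-drop constraint is also feasible under the Linearized Distflow voltage-drop constraint. -/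
/-- Every nonnegative power allocation that is feasible under the Distflow
voltage-drop constraint `V_0^D ≤ 1 / (1 - Δ)` is also feasible under the Linearized
Distflow voltage-drop constraint `2 r ∑_{j=1}^N ∑_{k=j}^N p k ≤ Δ (2 - Δ) / (1 - Δ)²`;
that is, `C^D ⊆ C^{LD}`. -/
theorem distflow_feasible_subset_linDistflow_feasible
    (N : ℕ) (hN : 1 ≤ N) (r : ℝ) (hr : 0 < r)
    (Δ : ℝ) (hΔ0 : 0 < Δ) (hΔ1 : Δ ≤ 1 / 2) :
    {p : ℕ → ℝ | (∀ j, 1 ≤ j → j ≤ N → 0 ≤ p j) ∧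
        distflowV N r p 0 ≤ 1 / (1 - Δ)}
      ⊆ {p : ℕ → ℝ | (∀ j, 1 ≤ j → j ≤ N → 0 ≤ p j) ∧
        2 * r * ∑ j ∈ Finset.Icc 1 N, ∑ k ∈ Finset.Icc j N, p k
          ≤ Δ * (2 - Δ) / (1 - Δ) ^ 2} := by
  intro p hp
  obtain ⟨hp0, hV⟩ := hp
  refine ⟨hp0, ?_⟩
  set W := distflowW N r p with hWdef
  have key : ∀ k, k + 1 ≤ N →
      1 ≤ W k ∧ W k ≤ W (k + 1) ∧
      2 * r * ∑ i ∈ Finset.range (k + 1), p (N - i) ≤ W (k + 1) ^ 2 - W k ^ 2 := by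
    intro k
    induction k with
    | zero =>
      intro _
      have hpN : 0 ≤ p N := hp0 N hN le_rfl
      have h0 : W 0 = 1 := rfl
      have h1 : W 1 = 1 + r * p N := rfl
      rw [h0, h1, Finset.sum_range_one]
      refine ⟨le_refl 1, by nlinarith, ?_⟩
      simp only [Nat.sub_zero]
      nlinarith [sq_nonneg (r * p N)]
    | succ k ih =>
      intro hk
      have hk' : k + 1 ≤ N := by omega
      obtain ⟨ha1, hab, hsq⟩ := ih hk'
      have hb1 : 1 ≤ W (k + 1) := le_trans ha1 hab
      have hbpos : 0 < W (k + 1) := by linarith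
      have hq : 0 ≤ p (N - (k + 1)) := hp0 _ (by omega) (by omega)
      have hc : W (k + 2) = 2 * W (k + 1) - W k + r * p (N - (k + 1)) / W (k + 1) := rfl
      set a := W k
      set b := W (k + 1)
      set c := W (k + 2)
      set q := p (N - (k + 1)) with hqdef
      have hd : r * q / b * b = r * q := div_mul_cancel₀ _ (ne_of_gt hbpos)
      have hd0 : 0 ≤ r * q / b := by positivity
      have hbc : b ≤ c := by rw [hc]; nlinarith
      refine ⟨hb1, hbc, ?_⟩
      rw [Finset.sum_range_succ]
      have hca : a ≤ c := le_trans hab hbc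
      nlinarith [mul_nonneg (by linarith : (0:ℝ) ≤ b - a) (by linarith : (0:ℝ) ≤ c - a),
        mul_nonneg hd0 (by linarith : (0:ℝ) ≤ c - b)]
  have tel : ∀ n, n ≤ N →
      1 + 2 * r * ∑ k ∈ Finset.range n, ∑ i ∈ Finset.range (k + 1), p (N - i) ≤ W n ^ 2 := by
    intro n
    induction n with
    | zero => intro _; simp [show W 0 = 1 from rfl]
    | succ n ih =>
      intro hn
      have h1 := ih (by omega)
      have h2 := (key n hn).2.2
      rw [Finset.sum_range_succ]
      nlinarith
  have hsum : ∑ k ∈ Finset.range N, ∑ i ∈ Finset.range (k + 1), p (N - i)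
      = ∑ j ∈ Finset.Icc 1 N, ∑ m ∈ Finset.Icc j N, p m := by
    refine Finset.sum_nbij' (fun k => N - k) (fun j => N - j) ?_ ?_ ?_ ?_ ?_
    · intro k hk
      simp only [Finset.mem_range] at hk
      simp only [Finset.mem_Icc]
      omega
    · intro j hj
      simp only [Finset.mem_Icc] at hj
      simp only [Finset.mem_range]
      omega
    · intro k hk
      simp only [Finset.mem_range] at hk
      show N - (N - k) = k
      omega
    · intro j hj
      simp only [Finset.mem_Icc] at hj
      show N - (N - j) = j
      omega
    · intro k hk
      simp only [Finset.mem_range] at hk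
      refine Finset.sum_nbij' (fun i => N - i) (fun m => N - m) ?_ ?_ ?_ ?_ ?_
      · intro i hi
        simp only [Finset.mem_range] at hi
        simp only [Finset.mem_Icc]
        omega
      · intro m hm
        simp only [Finset.mem_Icc] at hm
        simp only [Finset.mem_range]
        omega
      · intro i hi
        simp only [Finset.mem_range] at hi
        show N - (N - i) = i
        omega
      · intro m hm
        simp only [Finset.mem_Icc] at hm
        show N - (N - m) = m
        omega
      · intro i hi
        rfl
  have hWN : distflowV N r p 0 = W N := by simp [distflowV, hWdef]
  rw [hWN] at hV
  have hW1 : 1 ≤ W N := by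
    obtain ⟨h1, h2, -⟩ := key (N - 1) (by omega)
    have : N - 1 + 1 = N := by omega
    rw [this] at h2
    linarith
  have hT := tel N le_rfl
  rw [hsum] at hT
  have hΔp : 0 < 1 - Δ := by linarith
  have hsq2 : W N ^ 2 ≤ (1 / (1 - Δ)) ^ 2 := by
    have h0 : (0:ℝ) ≤ W N := by linarith
    exact pow_le_pow_left₀ h0 hV 2
  have heq : (1 / (1 - Δ)) ^ 2 - 1 = Δ * (2 - Δ) / (1 - Δ) ^ 2 := by
    field_simp
    ring
  linarith
end
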